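/- Let d ∈ {3, 4, 5}, fix G ∈ [0, 1/2], and set x := √(1 − (1 − 2G)²). Define ω : Fin d × Fin d → ℝ by ω_{00} = ω_{(d−1)(d−1)} = (1 + x)/4, ω_{0(d−1)} = ω_{(d−1)0} = (1 − x)/4, and ω_{ln} = 0 otherwise. Then ω is a valid probability weight (nonnegative entries summing to 1), g_d(ω) = G, and Q(ω) = 8(1 + x) = 8(1 + √(1 − (1 − 2G)²)). (This is the optimal two-qudit probe |ψ^o_{2,d}(G)⟩ at fixed GGM G.) -/

import Mathlib

/-!
The weight lives on the corners `{0, d-1}²`, where `η̄ = ∓1`; hence `⟨h⟩ = 0` and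
`⟨h²⟩ = 8 ω₀₀`, which gives `Q`. Its coefficient matrix `A` has the shape
`a (E₀₀ + E_{d-1,d-1}) + b (E_{0,d-1} + E_{d-1,0})`, and so has `AᵀA`. Such a matrix `M`
satisfies `M (M - (a + b)) (M - (a - b)) = 0`, so for `b ≥ 0` its largest eigenvalue is `a + b`;
for `AᵀA` this is `(√ω₀₀ + √ω₀,d-1)² = 1/2 + (1 - 2G)/2 = 1 - G`.
-/

open Matrix

/-- Rescaled, equally spaced eigenvalues `η̄_j = (2j − (d−1))/(d−1) ∈ [−1, 1]` of the local
rescaled spin-z operator `Z̄_d`. -/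
noncomputable def etabar (d : ℕ) (j : Fin d) : ℝ :=
  (2 * (j : ℝ) - ((d : ℝ) - 1)) / ((d : ℝ) - 1)

/-- Quantum Fisher information of the two-qudit probe `|ψ⟩ = Σ_{l,n} √ω_{ln} |l n⟩` under
the generator `h = Z̄_d⊗I + I⊗Z̄_d`:
`Q(ω) = 4[Σ ω_{ln}(η̄_l + η̄_n)² − (Σ ω_{ln}(η̄_l + η̄_n))²]`. -/
noncomputable def QFId (d : ℕ) (ω : Fin d × Fin d → ℝ) : ℝ :=
  4 * ((∑ l, ∑ n, ω (l, n) * (etabar d l + etabar d n) ^ 2) -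
    (∑ l, ∑ n, ω (l, n) * (etabar d l + etabar d n)) ^ 2)

/-- The matrix of coefficients `A_{ln} = √ω_{ln}` of the probe. -/
noncomputable def Amat (d : ℕ) (ω : Fin d × Fin d → ℝ) : Matrix (Fin d) (Fin d) ℝ :=
  Matrix.of fun l n => Real.sqrt (ω (l, n))

/-- The Gram matrix `AᵀA` is real symmetric (Hermitian). -/
theorem gram_isHermitian (d : ℕ) (ω : Fin d × Fin d → ℝ) :
    ((Amat d ω)ᵀ * Amat d ω).IsHermitian := by
  rw [← Matrix.conjTranspose_eq_transpose_of_trivial]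
  exact Matrix.isHermitian_conjTranspose_mul_self _

/-- The eigenvalues of `AᵀA` (the squared Schmidt coefficients of the probe). -/
noncomputable def gramEig (d : ℕ) (ω : Fin d × Fin d → ℝ) : Fin d → ℝ :=
  (gram_isHermitian d ω).eigenvalues

/-- Generalized geometric measure `g_d(ω) = 1 − λ_max(AᵀA)`. -/
noncomputable def GGMd (d : ℕ) (ω : Fin d × Fin d → ℝ) : ℝ :=
  1 - ⨆ i, gramEig d ω i

/-- Von Neumann entanglement entropy `S_d(ω) = −Σ_i λ_i log₂ λ_i`, where the `λ_i` are the
eigenvalues of `AᵀA` (with `0 log₂ 0 = 0`, automatic since `Real.logb 2 0 = 0`). -/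
noncomputable def entEntropyd (d : ℕ) (ω : Fin d × Fin d → ℝ) : ℝ :=
  -∑ i, gramEig d ω i * Real.logb 2 (gramEig d ω i)

/-- Binary entropy `H(p) = −p log₂ p − (1−p) log₂ (1−p)`. -/
noncomputable def binEnt (p : ℝ) : ℝ :=
  -(p * Real.logb 2 p) - (1 - p) * Real.logb 2 (1 - p)

section PairMatrix

variable {n : Type*} [DecidableEq n] {R : Type*} (i j : n)

def pairMatrix [Zero R] (a b : R) : Matrix n n R :=
  of fun l m => if (l = i ∧ m = i) ∨ (l = j ∧ m = j) then a
    else if (l = i ∧ m = j) ∨ (l = j ∧ m = i) then b else 0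

variable {i j}

theorem pairMatrix_eq_smul_single [Semiring R] (hij : i ≠ j) (a b : R) :
    pairMatrix i j a b =
      a • (single i i 1 + single j j 1) + b • (single i j 1 + single j i 1) := by
  ext l m
  by_cases hli : l = i <;> by_cases hlj : l = j <;> by_cases hmi : m = i <;>
    by_cases hmj : m = j <;> simp_all [pairMatrix, single, eq_comm]

theorem transpose_pairMatrix [Zero R] (a b : R) : (pairMatrix i j a b)ᵀ = pairMatrix i j a b := by
  ext l m
  simp only [transpose_apply, pairMatrix, of_apply, or_comm, and_comm]

theorem pairMatrix_nonneg [Zero R] [Preorder R] {a b : R} (ha : 0 ≤ a) (hb : 0 ≤ b) (l m : n) :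
    0 ≤ pairMatrix i j a b l m := by
  simp only [pairMatrix, of_apply]
  split_ifs <;> first | exact ha | exact hb | exact le_rfl

variable [Fintype n]

theorem pairMatrix_mul_pairMatrix [CommSemiring R] (hij : i ≠ j) (a b c e : R) :
    pairMatrix i j a b * pairMatrix i j c e = pairMatrix i j (a * c + b * e) (a * e + b * c) := by
  simp only [pairMatrix_eq_smul_single hij, add_mul, mul_add, smul_mul_assoc, mul_smul_comm,
    single_mul_single_same, single_mul_single_of_ne, ne_eq, hij, hij.symm, not_false_eq_true,
    mul_one, add_zero, zero_add]
  module

theorem sum_sum_pairMatrix_mul [Semiring R] (hij : i ≠ j) (a b : R) (g : n → n → R) :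
    ∑ l, ∑ m, pairMatrix i j a b l m * g l m = a * (g i i + g j j) + b * (g i j + g j i) := by
  simp [pairMatrix_eq_smul_single hij, single, ite_and, add_mul, mul_add, Finset.sum_add_distrib]

theorem sum_pairMatrix_apply [CommSemiring R] (hij : i ≠ j) (a b : R) :
    ∑ p : n × n, pairMatrix i j a b p.1 p.2 = 2 * (a + b) := by
  have h := sum_sum_pairMatrix_mul hij a b fun _ _ => 1
  simp only [mul_one] at h
  rw [Fintype.sum_prod_type]
  exact h.trans (by ring)

theorem pairMatrix_mulVec_single_add_single [Semiring R] (hij : i ≠ j) (a b : R) :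
    pairMatrix i j a b *ᵥ (Pi.single i 1 + Pi.single j 1) =
      (a + b) • (Pi.single i 1 + Pi.single j 1) := by
  ext l
  by_cases hli : l = i <;> by_cases hlj : l = j <;>
    simp_all [pairMatrix_eq_smul_single hij, add_mulVec, single_mulVec]

theorem pairMatrix_mul_sub_mul_sub [CommRing R] (hij : i ≠ j) (a b : R) :
    pairMatrix i j a b * (pairMatrix i j a b - (a + b) • 1) *
      (pairMatrix i j a b - (a - b) • 1) = 0 := by
  simp only [mul_sub, sub_mul, mul_smul_comm, smul_mul_assoc, mul_one,
    pairMatrix_mul_pairMatrix hij]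
  simp only [pairMatrix_eq_smul_single hij]
  module

section Field

variable {K : Type*} [Field K]

theorem add_mem_spectrum_pairMatrix (hij : i ≠ j) (a b : K) :
    a + b ∈ spectrum K (pairMatrix i j a b) := by
  rw [spectrum.mem_iff, isUnit_iff_isUnit_det, isUnit_iff_ne_zero, not_not,
    ← exists_mulVec_eq_zero_iff]
  refine ⟨Pi.single i 1 + Pi.single j 1, fun h => ?_, ?_⟩
  · simpa [Pi.single_apply, hij] using congrFun h i
  · rw [sub_mulVec, pairMatrix_mulVec_single_add_single hij, Algebra.algebraMap_eq_smul_one,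
      smul_mulVec, one_mulVec, sub_self]

open Polynomial in
theorem eq_zero_or_of_mem_spectrum_pairMatrix (hij : i ≠ j) {a b μ : K}
    (hμ : μ ∈ spectrum K (pairMatrix i j a b)) : μ = 0 ∨ μ = a + b ∨ μ = a - b := by
  have hroot := spectrum.subset_polynomial_aeval (pairMatrix i j a b)
    (X * (X - C (a + b)) * (X - C (a - b))) ⟨μ, hμ, rfl⟩
  have : Nonempty n := ⟨i⟩
  rw [map_mul, map_mul, map_sub, map_sub, aeval_X, aeval_C, aeval_C,
    Algebra.algebraMap_eq_smul_one, Algebra.algebraMap_eq_smul_one,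
    pairMatrix_mul_sub_mul_sub hij, spectrum.zero_eq] at hroot
  simpa only [Set.mem_singleton_iff, eval_mul, eval_sub, eval_X, eval_C, mul_eq_zero, sub_eq_zero,
    or_assoc] using hroot

end Field

theorem isGreatest_spectrum_pairMatrix (hij : i ≠ j) {a b : ℝ} (hb : 0 ≤ b)
    (hab : 0 ≤ a + b) : IsGreatest (spectrum ℝ (pairMatrix i j a b)) (a + b) := by
  refine ⟨add_mem_spectrum_pairMatrix hij a b, fun μ hμ => ?_⟩
  rcases eq_zero_or_of_mem_spectrum_pairMatrix hij hμ with rfl | rfl | rfl <;> linarith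

end PairMatrix

theorem Matrix.IsHermitian.iSup_eigenvalues_eq {n 𝕜 : Type*} [Fintype n] [DecidableEq n]
    [RCLike 𝕜] {A : Matrix n n 𝕜} (hA : A.IsHermitian) {t : ℝ} (ht : IsGreatest (spectrum ℝ A) t) :
    ⨆ k, hA.eigenvalues k = t := by
  rw [← sSup_range, ← hA.spectrum_real_eq_range_eigenvalues]
  exact ht.csSup_eq

theorem etabar_of_val_eq_zero {d : ℕ} (hd : 2 ≤ d) {j : Fin d} (hj : (j : ℕ) = 0) :
    etabar d j = -1 := by
  have : (d : ℝ) - 1 ≠ 0 := by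
    rw [sub_ne_zero]; exact_mod_cast (by omega : d ≠ 1)
  rw [etabar, hj]
  field_simp
  ring

theorem etabar_of_val_eq_sub_one {d : ℕ} (hd : 2 ≤ d) {j : Fin d} (hj : (j : ℕ) = d - 1) :
    etabar d j = 1 := by
  have : (d : ℝ) - 1 ≠ 0 := by
    rw [sub_ne_zero]; exact_mod_cast (by omega : d ≠ 1)
  rw [etabar, hj, Nat.cast_sub (by omega), Nat.cast_one]
  field_simp
  ring

section PairWeight

variable {d : ℕ} {i j : Fin d}

theorem QFId_pairMatrix (hij : i ≠ j) (hi : etabar d i = -1) (hj : etabar d j = 1)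
    (c₁ c₂ : ℝ) : QFId d (fun p => pairMatrix i j c₁ c₂ p.1 p.2) = 32 * c₁ := by
  simp only [QFId, sum_sum_pairMatrix_mul hij, hi, hj]
  ring

theorem Amat_pairMatrix (c₁ c₂ : ℝ) :
    Amat d (fun p => pairMatrix i j c₁ c₂ p.1 p.2) = pairMatrix i j √c₁ √c₂ := by
  ext l m
  simp only [Amat, of_apply, pairMatrix]
  split_ifs <;> simp

theorem GGMd_pairMatrix (hij : i ≠ j) (c₁ c₂ : ℝ) :
    GGMd d (fun p => pairMatrix i j c₁ c₂ p.1 p.2) = 1 - (√c₁ + √c₂) ^ 2 := by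
  have hgram : (Amat d (fun p => pairMatrix i j c₁ c₂ p.1 p.2))ᵀ *
      Amat d (fun p => pairMatrix i j c₁ c₂ p.1 p.2) =
      pairMatrix i j (√c₁ * √c₁ + √c₂ * √c₂) (2 * (√c₁ * √c₂)) := by
    rw [Amat_pairMatrix, transpose_pairMatrix, pairMatrix_mul_pairMatrix hij]
    congr 1
    ring
  have htop := isGreatest_spectrum_pairMatrix hij (a := √c₁ * √c₁ + √c₂ * √c₂)
    (b := 2 * (√c₁ * √c₂)) (by positivity) (by positivity)
  rw [← hgram] at htop
  rw [GGMd, gramEig, (gram_isHermitian d _).iSup_eigenvalues_eq htop]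
  ring

end PairWeight

/-- For `d ∈ {3, 4, 5}`, `G ∈ [0, 1/2]` and `x = √(1 − (1 − 2G)²)`, the
weight `ω` with `ω_{00} = ω_{(d−1)(d−1)} = (1+x)/4`, `ω_{0(d−1)} = ω_{(d−1)0} = (1−x)/4`,
and all other entries `0` is a valid probability weight with `g_d(ω) = G` and
`Q(ω) = 8(1 + x)`. (The optimal two-qudit probe at fixed GGM `G`.) -/
theorem optimal_probe_fixed_ggm_two_qudits (d : ℕ) (hd : d = 3 ∨ d = 4 ∨ d = 5) (G x : ℝ)
    (hG : G ∈ Set.Icc (0 : ℝ) (1 / 2)) (hx : x = Real.sqrt (1 - (1 - 2 * G) ^ 2))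
    (ω : Fin d × Fin d → ℝ)
    (hω : ∀ l n : Fin d, ω (l, n) =
      if ((l : ℕ) = 0 ∧ (n : ℕ) = 0) ∨ ((l : ℕ) = d - 1 ∧ (n : ℕ) = d - 1) then (1 + x) / 4
      else if ((l : ℕ) = 0 ∧ (n : ℕ) = d - 1) ∨ ((l : ℕ) = d - 1 ∧ (n : ℕ) = 0) then
        (1 - x) / 4
      else 0) :
    (∀ p, 0 ≤ ω p) ∧ (∑ p, ω p) = 1 ∧ GGMd d ω = G ∧
      QFId d ω = 8 * (1 + x) ∧
      QFId d ω = 8 * (1 + Real.sqrt (1 - (1 - 2 * G) ^ 2)) := by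
  have hd2 : 2 ≤ d := by omega
  obtain ⟨hG0, hG1⟩ := hG
  have hx2 : x ^ 2 = 1 - (1 - 2 * G) ^ 2 := hx ▸ Real.sq_sqrt (by nlinarith)
  have hx0 : 0 ≤ x := hx ▸ Real.sqrt_nonneg _
  have hx1 : x ≤ 1 := by nlinarith
  set i₀ : Fin d := ⟨0, by omega⟩
  set i₁ : Fin d := ⟨d - 1, by omega⟩
  have hne : i₀ ≠ i₁ := by simp [i₀, i₁, Fin.ext_iff]; omega
  have hω' : ω = fun p => pairMatrix i₀ i₁ ((1 + x) / 4) ((1 - x) / 4) p.1 p.2 := by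
    funext ⟨l, n⟩
    simp [hω, pairMatrix, i₀, i₁, Fin.ext_iff]
  have hcross : √((1 + x) / 4) * √((1 - x) / 4) = (1 - 2 * G) / 4 := by
    rw [← Real.sqrt_mul (by linarith), ← Real.sqrt_sq (by linarith : 0 ≤ (1 - 2 * G) / 4)]
    congr 1
    linear_combination (-1 / 16 : ℝ) * hx2
  have hQ : QFId d ω = 8 * (1 + x) := by
    rw [hω', QFId_pairMatrix hne (etabar_of_val_eq_zero hd2 rfl)
      (etabar_of_val_eq_sub_one hd2 rfl)]
    ring
  subst hω'
  refine ⟨fun p => pairMatrix_nonneg (by linarith) (by linarith) p.1 p.2, ?_, ?_, hQ, hx ▸ hQ⟩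
  · rw [sum_pairMatrix_apply hne]
    ring
  · rw [GGMd_pairMatrix hne, add_sq, Real.sq_sqrt (by linarith), Real.sq_sqrt (by linarith),
      mul_assoc, hcross]
    ring
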